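/- arXiv:1601.04565 — 2 statements merged into one kernel-verified Lean document; each statement's English description precedes it below -/
import Mathlib

section
/- Let A be a graded-commutative superalgebra over a field of characteristic not 2, let R = A_0^ev ⊕ A_1^odd, and let I be a homogeneous ideal of R containing the nilradical of R. Then I^+ := I ⊕ A_0^odd ⊕ A_1^ev is a homogeneous (two-sided) ideal of A. -/
/-- A graded-commutative graded superalgebra over `k`: a `ℤ × ZMod 2`-graded
`k`-algebra satisfying the sign rule `ab = (-1)^(|a|·|b| + deg a · deg b) ba`
for homogeneous elements. -/
structure GradedSuperalgebra (k A : Type) [Field k] [Ring A] [Algebra k A] where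
  grading : ℤ × ZMod 2 → Submodule k A
  one_mem : (1 : A) ∈ grading (0, 0)
  mul_mem : ∀ {i j : ℤ × ZMod 2} {a b : A},
    a ∈ grading i → b ∈ grading j → a * b ∈ grading (i + j)
  internal : DirectSum.IsInternal grading
  comm : ∀ {m n : ℤ} {s t : ZMod 2} {a b : A}, a ∈ grading (m, s) → b ∈ grading (n, t) →
    a * b = ((-1 : k) ^ ((s * t).val + (m * n).natAbs)) • (b * a)

namespace GradedSuperalgebra

variable {k A : Type} [Field k] [Ring A] [Algebra k A] (GS : GradedSuperalgebra k A)

/-- The sum of the graded pieces whose index satisfies a predicate. -/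
def piece (P : ℤ × ZMod 2 → Prop) : Submodule k A :=
  ⨆ p : {p : ℤ × ZMod 2 // P p}, GS.grading p

/-- `R = A₀ᵉᵛ ⊕ A₁ᵒᵈᵈ`: even ℤ-degree with parity `0` together with odd ℤ-degree
with parity `1`; an ordinary-commutative subalgebra of `A`. -/
def Rsub : Submodule k A :=
  GS.piece fun p => (Even p.1 ∧ p.2 = 0) ∨ (Odd p.1 ∧ p.2 = 1)

/-- `A₀ᵉᵛ`: even ℤ-degree, parity `0`. -/
def A0ev : Submodule k A := GS.piece fun p => Even p.1 ∧ p.2 = 0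

/-- `A₁ᵒᵈᵈ`: odd ℤ-degree, parity `1`. -/
def A1odd : Submodule k A := GS.piece fun p => Odd p.1 ∧ p.2 = 1

/-- `A₀ᵒᵈᵈ`: odd ℤ-degree, parity `0`. -/
def A0odd : Submodule k A := GS.piece fun p => Odd p.1 ∧ p.2 = 0

/-- `A₁ᵉᵛ`: even ℤ-degree, parity `1`. -/
def A1ev : Submodule k A := GS.piece fun p => Even p.1 ∧ p.2 = 1

/-- A submodule of `A` is homogeneous if it is spanned by its homogeneous elements. -/
def IsHomogeneous (I : Submodule k A) : Prop :=
  I = Submodule.span k {x : A | x ∈ I ∧ ∃ p, x ∈ GS.grading p}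

end GradedSuperalgebra

/-!
Call a bidegree `(m, s)` even or odd according to its total parity `m + s mod 2`; then `R` is the
sum of the even pieces and `A₀ᵒᵈᵈ ⊕ A₁ᵉᵛ` the sum `O` of the odd ones, and `A = R ⊕ O`. Products
of pieces add total parities, so `R · O` and `O · R` lie in `O`. The sign rule makes every
homogeneous odd `a` anticommute with itself, so `a² = 0` as `2` is invertible; hence for
homogeneous `b` also `(ab)² = a (ba) b = ± a² b² = 0`. Thus `O · O` consists of sums of nilpotent
elements of `R`, which lie in `I`. Altogether `A · (I + O)` and `(I + O) · A` lie in `I + O`.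
-/

/-- The total parity `m + s mod 2` of a bidegree `(m, s)`. -/
def totalParity : ℤ × ZMod 2 →+ ZMod 2 :=
  (Int.castAddHom (ZMod 2)).coprod (AddMonoidHom.id _)

lemma totalParity_eq_zero_iff (p : ℤ × ZMod 2) :
    totalParity p = 0 ↔ (Even p.1 ∧ p.2 = 0) ∨ (Odd p.1 ∧ p.2 = 1) := by
  obtain ⟨m, s⟩ := p
  rw [← ZMod.intCast_eq_zero_iff_even, ← ZMod.intCast_eq_one_iff_odd]
  simp only [totalParity, AddMonoidHom.coprod_apply, Int.coe_castAddHom, AddMonoidHom.id_apply]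
  generalize (m : ZMod 2) = c
  revert c s
  decide

lemma totalParity_eq_one_iff (p : ℤ × ZMod 2) :
    totalParity p = 1 ↔ (Odd p.1 ∧ p.2 = 0) ∨ (Even p.1 ∧ p.2 = 1) := by
  obtain ⟨m, s⟩ := p
  rw [← ZMod.intCast_eq_zero_iff_even, ← ZMod.intCast_eq_one_iff_odd]
  simp only [totalParity, AddMonoidHom.coprod_apply, Int.coe_castAddHom, AddMonoidHom.id_apply]
  generalize (m : ZMod 2) = c
  revert c s
  decide

lemma natCast_val_mul_self_add_natAbs_mul_self (m : ℤ) (s : ZMod 2) :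
    (((s * s).val + (m * m).natAbs : ℕ) : ZMod 2) = totalParity (m, s) := by
  push_cast [ZMod.natCast_val, ZMod.cast_id', ZMod.natAbs_mod_two]
  simp only [totalParity, AddMonoidHom.coprod_apply, Int.coe_castAddHom, AddMonoidHom.id_apply, id]
  generalize (m : ZMod 2) = c
  revert c s
  decide

section TwoSidedIdeal

variable {k A : Type} [Field k] [Ring A] [Algebra k A] {I E O : Submodule k A}

lemma Submodule.top_mul_sup_le (hIE : I ≤ E) (hEI : E * I ≤ I) (hEO : E * O ≤ O)
    (hOE : O * E ≤ O) (hOO : O * O ≤ I) (hsup : E ⊔ O = ⊤) : ⊤ * (I ⊔ O) ≤ I ⊔ O := by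
  have hOI : O * I ≤ O := (mul_le_mul_right hIE O).trans hOE
  rw [← hsup, Submodule.sup_mul, Submodule.mul_sup, Submodule.mul_sup]
  exact sup_le (sup_le (le_sup_of_le_left hEI) (le_sup_of_le_right hEO))
    (sup_le (le_sup_of_le_right hOI) (le_sup_of_le_left hOO))

lemma Submodule.sup_mul_top_le (hIE : I ≤ E) (hIEI : I * E ≤ I) (hOE : O * E ≤ O)
    (hEO : E * O ≤ O) (hOO : O * O ≤ I) (hsup : E ⊔ O = ⊤) : (I ⊔ O) * ⊤ ≤ I ⊔ O := by
  have hIO : I * O ≤ O := (mul_le_mul_left hIE O).trans hEO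
  rw [← hsup, Submodule.mul_sup, Submodule.sup_mul, Submodule.sup_mul]
  exact sup_le (sup_le (le_sup_of_le_left hIEI) (le_sup_of_le_right hOE))
    (sup_le (le_sup_of_le_right hIO) (le_sup_of_le_left hOO))

end TwoSidedIdeal

namespace GradedSuperalgebra

variable {k A : Type} [Field k] [Ring A] [Algebra k A] (GS : GradedSuperalgebra k A)

lemma grading_le_piece {P : ℤ × ZMod 2 → Prop} {p : ℤ × ZMod 2} (hp : P p) :
    GS.grading p ≤ GS.piece P :=
  le_iSup (fun q : {q // P q} => GS.grading q) ⟨p, hp⟩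

lemma piece_sup_piece (P Q : ℤ × ZMod 2 → Prop) :
    GS.piece P ⊔ GS.piece Q = GS.piece fun p => P p ∨ Q p := by
  refine le_antisymm (sup_le ?_ ?_) (iSup_le ?_)
  · exact iSup_le fun p => GS.grading_le_piece (Or.inl p.2)
  · exact iSup_le fun p => GS.grading_le_piece (Or.inr p.2)
  · rintro ⟨p, hp | hp⟩
    exacts [le_sup_of_le_left (GS.grading_le_piece hp),
      le_sup_of_le_right (GS.grading_le_piece hp)]

lemma piece_mul_piece_le {P Q : ℤ × ZMod 2 → Prop} {M : Submodule k A}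
    (h : ∀ p q, P p → Q q → ∀ a ∈ GS.grading p, ∀ b ∈ GS.grading q, a * b ∈ M) :
    GS.piece P * GS.piece Q ≤ M := by
  simp only [piece, Submodule.iSup_mul, Submodule.mul_iSup]
  exact iSup_le fun q => iSup_le fun p => Submodule.mul_le.2 (h p q p.2 q.2)

lemma piece_mul_piece_le_piece {P Q S : ℤ × ZMod 2 → Prop} (h : ∀ p q, P p → Q q → S (p + q)) :
    GS.piece P * GS.piece Q ≤ GS.piece S :=
  GS.piece_mul_piece_le fun p q hp hq _ ha _ hb =>
    GS.grading_le_piece (h p q hp hq) (GS.mul_mem ha hb)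

lemma piece_even_mul_piece_odd_le :
    GS.piece (totalParity · = 0) * GS.piece (totalParity · = 1) ≤ GS.piece (totalParity · = 1) :=
  GS.piece_mul_piece_le_piece fun p q hp hq => by rw [map_add, hp, hq, zero_add]

lemma piece_odd_mul_piece_even_le :
    GS.piece (totalParity · = 1) * GS.piece (totalParity · = 0) ≤ GS.piece (totalParity · = 1) :=
  GS.piece_mul_piece_le_piece fun p q hp hq => by rw [map_add, hp, hq, add_zero]

lemma Rsub_eq : GS.Rsub = GS.piece (totalParity · = 0) :=
  congrArg GS.piece (funext fun p => propext (totalParity_eq_zero_iff p).symm)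

lemma A0odd_sup_A1ev : GS.A0odd ⊔ GS.A1ev = GS.piece (totalParity · = 1) := by
  rw [A0odd, A1ev, piece_sup_piece]
  exact congrArg GS.piece (funext fun p => propext (totalParity_eq_one_iff p).symm)

lemma piece_even_sup_piece_odd :
    GS.piece (totalParity · = 0) ⊔ GS.piece (totalParity · = 1) = ⊤ := by
  rw [piece_sup_piece, eq_top_iff, ← GS.internal.submodule_iSup_eq_top]
  exact iSup_le fun p => GS.grading_le_piece (by generalize totalParity p = s; revert s; decide)

lemma mul_self_eq_zero_of_totalParity_eq_one (h2 : (2 : k) ≠ 0) {p : ℤ × ZMod 2}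
    (hp : totalParity p = 1) {a : A} (ha : a ∈ GS.grading p) : a * a = 0 := by
  have hsign : (-1 : k) ^ ((p.2 * p.2).val + (p.1 * p.1).natAbs) = -1 :=
    Odd.neg_one_pow <| by
      rw [← ZMod.natCast_eq_one_iff_odd, natCast_val_mul_self_add_natAbs_mul_self]
      exact hp
  have hanti : a * a = -(a * a) := by
    simpa only [hsign, neg_one_smul] using GS.comm (m := p.1) (s := p.2) ha ha
  have htwo : (2 : k) • (a * a) = 0 := by
    rw [two_smul]
    nth_rewrite 1 [hanti]
    exact neg_add_cancel _
  exact (smul_eq_zero.1 htwo).resolve_left h2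

lemma mul_mul_mul_self_eq_zero {p q : ℤ × ZMod 2} {a b : A} (ha : a ∈ GS.grading p)
    (hb : b ∈ GS.grading q) (haa : a * a = 0) : a * b * (a * b) = 0 := by
  calc a * b * (a * b) = a * (b * a) * b := by simp only [mul_assoc]
    _ = 0 := by
      rw [GS.comm (m := q.1) (s := q.2) hb ha, mul_smul_comm, smul_mul_assoc, ← mul_assoc, haa,
        zero_mul, zero_mul, smul_zero]

lemma piece_odd_mul_piece_odd_le (h2 : (2 : k) ≠ 0) {I : Submodule k A}
    (hInil : ∀ x ∈ GS.Rsub, (∃ n : ℕ, x ^ n = 0) → x ∈ I) :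
    GS.piece (totalParity · = 1) * GS.piece (totalParity · = 1) ≤ I := by
  refine GS.piece_mul_piece_le fun p q hp hq a ha b hb => hInil _ ?_ ⟨2, ?_⟩
  · rw [Rsub_eq]
    exact GS.grading_le_piece (by rw [map_add, hp, hq]; rfl) (GS.mul_mem ha hb)
  · rw [sq]
    exact GS.mul_mul_mul_self_eq_zero ha hb (GS.mul_self_eq_zero_of_totalParity_eq_one h2 hp ha)

variable {GS}

lemma isHomogeneous_iff_le {I : Submodule k A} :
    GS.IsHomogeneous I ↔ I ≤ Submodule.span k {x | x ∈ I ∧ ∃ p, x ∈ GS.grading p} :=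
  ⟨le_of_eq, fun h => le_antisymm h (Submodule.span_le.2 fun _ hx => hx.1)⟩

lemma IsHomogeneous.sup {I J : Submodule k A} (hI : GS.IsHomogeneous I)
    (hJ : GS.IsHomogeneous J) : GS.IsHomogeneous (I ⊔ J) := by
  rw [isHomogeneous_iff_le] at hI hJ ⊢
  exact sup_le (hI.trans (Submodule.span_mono fun x hx => ⟨Submodule.mem_sup_left hx.1, hx.2⟩))
    (hJ.trans (Submodule.span_mono fun x hx => ⟨Submodule.mem_sup_right hx.1, hx.2⟩))

variable (GS)

lemma isHomogeneous_piece (P : ℤ × ZMod 2 → Prop) : GS.IsHomogeneous (GS.piece P) :=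
  isHomogeneous_iff_le.2 <| iSup_le fun p _ hx =>
    Submodule.subset_span ⟨GS.grading_le_piece p.2 hx, p, hx⟩

end GradedSuperalgebra

theorem statement1 {k A : Type} [Field k] [Ring A] [Algebra k A]
    (h2 : (2 : k) ≠ 0) (GS : GradedSuperalgebra k A)
    (I : Submodule k A)
    (hIR : I ≤ GS.Rsub)
    (hIdeal : ∀ r ∈ GS.Rsub, ∀ x ∈ I, r * x ∈ I ∧ x * r ∈ I)
    (hIhom : GS.IsHomogeneous I)
    (hInil : ∀ x ∈ GS.Rsub, (∃ n : ℕ, x ^ n = 0) → x ∈ I) :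
    (∀ a : A, ∀ x ∈ I ⊔ GS.A0odd ⊔ GS.A1ev, a * x ∈ I ⊔ GS.A0odd ⊔ GS.A1ev ∧
      x * a ∈ I ⊔ GS.A0odd ⊔ GS.A1ev) ∧
    GS.IsHomogeneous (I ⊔ GS.A0odd ⊔ GS.A1ev) := by
  rw [sup_assoc, GS.A0odd_sup_A1ev]
  rw [GS.Rsub_eq] at hIR hIdeal
  have hEI := Submodule.mul_le.2 fun r hr x hx => (hIdeal r hr x hx).1
  have hIE := Submodule.mul_le.2 fun x hx r hr => (hIdeal r hr x hx).2
  have hOO := GS.piece_odd_mul_piece_odd_le h2 hInil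
  have hleft := Submodule.top_mul_sup_le hIR hEI GS.piece_even_mul_piece_odd_le
    GS.piece_odd_mul_piece_even_le hOO GS.piece_even_sup_piece_odd
  have hright := Submodule.sup_mul_top_le hIR hIE GS.piece_odd_mul_piece_even_le
    GS.piece_even_mul_piece_odd_le hOO GS.piece_even_sup_piece_odd
  exact ⟨fun a x hx => ⟨Submodule.mul_le.1 hleft a trivial x hx,
    Submodule.mul_le.1 hright x hx a trivial⟩, hIhom.sup (GS.isHomogeneous_piece _)⟩
end

section
/- Let k be an algebraically closed field of characteristic zero, G a finite group, V a finite-dimensional purely odd kG-module, and let M, N be finite-dimensional Λ(V)#kG-supermodules. If for some v ∈ V both M and N restricted to the subalgebra Λ(v) ⊆ Λ(V) are not free, then M ⊗ N restricted to Λ(v) is not free. (This is the key step in the tensor product property |V⋊G|_{M⊗N} = |V⋊G|_M ∩ |V⋊G|_N of support varieties.) -/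
open TensorProduct

/-!
STATEMENT 12. (Key step of the tensor product property of support varieties over
`Λ(V) # kG` in characteristic zero.)  A supermodule over the one-variable exterior
algebra `Λ(v) = k[v]/(v²)` (`v` odd) is a pair of `k`-spaces `M₀, M₁` with the
action maps `d₀ : M₀ → M₁`, `d₁ : M₁ → M₀` of `v` satisfying `d ∘ d = 0`; it fails
to be free iff it has a trivial direct summand, iff the 2-periodic complex it
determines is not exact, i.e. iff some `x` with `v·x = 0` is not of the form `v·y`.
The tensor product supermodule `M ⊗ N` carries the `v`-action
`v·(m ⊗ n) = (v·m) ⊗ n + (-1)^{|m|} m ⊗ (v·n)` (Koszul sign).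
Claim: if `M|_{Λ(v)}` and `N|_{Λ(v)}` are both not free, then `(M ⊗ N)|_{Λ(v)}`
is not free.
-/

/-- Non-freeness of the `Λ(v)`-supermodule `(M₀, M₁, d₀, d₁)`: some cycle is not a
boundary (equivalently, there is a trivial direct summand). -/
def NotFreeSuper {k M0 M1 : Type} [Field k]
    [AddCommGroup M0] [Module k M0] [AddCommGroup M1] [Module k M1]
    (d0 : M0 →ₗ[k] M1) (d1 : M1 →ₗ[k] M0) : Prop :=
  (∃ x : M0, d0 x = 0 ∧ x ∉ LinearMap.range d1) ∨
  (∃ x : M1, d1 x = 0 ∧ x ∉ LinearMap.range d0)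

section Aux
variable {k : Type} [Field k]

noncomputable def ctr {A B : Type} [AddCommGroup A] [Module k A]
    [AddCommGroup B] [Module k B] (φ : A →ₗ[k] k) : A ⊗[k] B →ₗ[k] B :=
  (TensorProduct.lid k B).toLinearMap ∘ₗ TensorProduct.map φ LinearMap.id

lemma ctr_tmul {A B : Type} [AddCommGroup A] [Module k A]
    [AddCommGroup B] [Module k B] (φ : A →ₗ[k] k) (a : A) (b : B) :
    ctr φ (a ⊗ₜ[k] b) = φ a • b := by
  simp [ctr]

lemma ctr_map {A A' B B' : Type} [AddCommGroup A] [Module k A]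
    [AddCommGroup A'] [Module k A'] [AddCommGroup B] [Module k B]
    [AddCommGroup B'] [Module k B'] (φ : A →ₗ[k] k)
    (f : A' →ₗ[k] A) (g : B' →ₗ[k] B) (t : A' ⊗[k] B') :
    ctr φ (TensorProduct.map f g t) = g (ctr (φ ∘ₗ f) t) := by
  have : ctr φ ∘ₗ TensorProduct.map f g = g ∘ₗ ctr (φ ∘ₗ f) := by
    ext a b; simp [ctr]
  exact LinearMap.congr_fun this t

lemma ctr_zero {A B : Type} [AddCommGroup A] [Module k A]
    [AddCommGroup B] [Module k B] (t : A ⊗[k] B) :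
    ctr (0 : A →ₗ[k] k) t = 0 := by
  have h : (ctr (0 : A →ₗ[k] k) : A ⊗[k] B →ₗ[k] B) = 0 := by ext a b; simp [ctr]
  simp [h]

lemma exists_dual {A A' : Type} [AddCommGroup A] [Module k A]
    [AddCommGroup A'] [Module k A'] (f : A' →ₗ[k] A) {x : A}
    (hx : x ∉ LinearMap.range f) :
    ∃ φ : A →ₗ[k] k, φ x = 1 ∧ φ ∘ₗ f = 0 := by
  set p := LinearMap.range f
  have hq : p.mkQ x ≠ 0 := by
    simpa [Submodule.Quotient.mk_eq_zero] using hx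
  obtain ⟨ψ, hψ⟩ : ∃ ψ : Module.Dual k (A ⧸ p), ψ (p.mkQ x) ≠ 0 := by
    by_contra h
    push_neg at h
    exact hq ((Module.forall_dual_apply_eq_zero_iff k _).mp h)
  refine ⟨(ψ (p.mkQ x))⁻¹ • (ψ ∘ₗ p.mkQ), ?_, ?_⟩
  · simp only [LinearMap.smul_apply, LinearMap.coe_comp, Function.comp_apply, smul_eq_mul]
    exact inv_mul_cancel₀ (by simpa using hψ)
  · ext a
    have h0 : (Submodule.Quotient.mk (f a) : A ⧸ p) = 0 :=
      (Submodule.Quotient.mk_eq_zero p).mpr ⟨a, rfl⟩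
    simp [Submodule.mkQ_apply, h0]
end Aux

theorem statement12 {k : Type} [Field k] [CharZero k] [IsAlgClosed k]
    {M0 M1 N0 N1 : Type}
    [AddCommGroup M0] [Module k M0] [FiniteDimensional k M0]
    [AddCommGroup M1] [Module k M1] [FiniteDimensional k M1]
    [AddCommGroup N0] [Module k N0] [FiniteDimensional k N0]
    [AddCommGroup N1] [Module k N1] [FiniteDimensional k N1]
    (dM0 : M0 →ₗ[k] M1) (dM1 : M1 →ₗ[k] M0)
    (hM10 : dM1 ∘ₗ dM0 = 0) (hM01 : dM0 ∘ₗ dM1 = 0)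
    (dN0 : N0 →ₗ[k] N1) (dN1 : N1 →ₗ[k] N0)
    (hN10 : dN1 ∘ₗ dN0 = 0) (hN01 : dN0 ∘ₗ dN1 = 0)
    (hM : NotFreeSuper dM0 dM1) (hN : NotFreeSuper dN0 dN1) :
    -- the even and odd parts of `M ⊗ N` and the `v`-action on them (Koszul signs):
    NotFreeSuper
      -- `D₀ : (M₀⊗N₀) × (M₁⊗N₁) → (M₀⊗N₁) × (M₁⊗N₀)`
      (LinearMap.prod
        (LinearMap.coprod (TensorProduct.map (LinearMap.id : M0 →ₗ[k] M0) dN0)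
          (TensorProduct.map dM1 (LinearMap.id : N1 →ₗ[k] N1)))
        (LinearMap.coprod (TensorProduct.map dM0 (LinearMap.id : N0 →ₗ[k] N0))
          (- TensorProduct.map (LinearMap.id : M1 →ₗ[k] M1) dN1)))
      -- `D₁ : (M₀⊗N₁) × (M₁⊗N₀) → (M₀⊗N₀) × (M₁⊗N₁)`
      (LinearMap.prod
        (LinearMap.coprod (TensorProduct.map (LinearMap.id : M0 →ₗ[k] M0) dN1)
          (TensorProduct.map dM1 (LinearMap.id : N0 →ₗ[k] N0)))
        (LinearMap.coprod (TensorProduct.map dM0 (LinearMap.id : N1 →ₗ[k] N1))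
          (- TensorProduct.map (LinearMap.id : M1 →ₗ[k] M1) dN0))) := by
  rcases hM with ⟨x, hx0, hxr⟩ | ⟨x, hx0, hxr⟩ <;>
    rcases hN with ⟨y, hy0, hyr⟩ | ⟨y, hy0, hyr⟩ <;>
    obtain ⟨φ, hφx, hφf⟩ := exists_dual _ hxr
  · -- x ∈ M0, y ∈ N0 : even cycle (x⊗y, 0)
    left
    refine ⟨(x ⊗ₜ y, 0), ?_, ?_⟩
    · simp [LinearMap.prod_apply, hx0, hy0]
    · rintro ⟨⟨a, b⟩, hab⟩
      apply hyr
      have h1 : TensorProduct.map LinearMap.id dN1 a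
          + TensorProduct.map dM1 LinearMap.id b = x ⊗ₜ y :=
        congrArg Prod.fst hab
      have := congrArg (ctr φ) h1
      rw [map_add, ctr_map, ctr_map, ctr_tmul, hφx, one_smul] at this
      rw [hφf, ctr_zero, map_zero, add_zero] at this
      exact ⟨_, by simpa using this⟩
  · -- x ∈ M0, y ∈ N1 : odd cycle (x⊗y, 0)
    right
    refine ⟨(x ⊗ₜ y, 0), ?_, ?_⟩
    · simp [LinearMap.prod_apply, hx0, hy0]
    · rintro ⟨⟨a, b⟩, hab⟩
      apply hyr
      have h1 : TensorProduct.map LinearMap.id dN0 a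
          + TensorProduct.map dM1 LinearMap.id b = x ⊗ₜ y :=
        congrArg Prod.fst hab
      have := congrArg (ctr φ) h1
      rw [map_add, ctr_map, ctr_map, ctr_tmul, hφx, one_smul] at this
      rw [hφf, ctr_zero, map_zero, add_zero] at this
      exact ⟨_, by simpa using this⟩
  · -- x ∈ M1, y ∈ N0 : odd cycle (0, x⊗y)
    right
    refine ⟨(0, x ⊗ₜ y), ?_, ?_⟩
    · simp [LinearMap.prod_apply, hx0, hy0]
    · rintro ⟨⟨a, b⟩, hab⟩
      apply hyr
      have h2 : TensorProduct.map dM0 LinearMap.id a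
          - TensorProduct.map LinearMap.id dN1 b = x ⊗ₜ y := by
        have := congrArg Prod.snd hab
        simpa [sub_eq_add_neg] using this
      have := congrArg (ctr φ) h2
      rw [map_sub, ctr_map, ctr_map, ctr_tmul, hφx, one_smul] at this
      rw [hφf, ctr_zero, map_zero, zero_sub] at this
      exact ⟨-(ctr (φ ∘ₗ LinearMap.id) b), by simpa using this⟩
  · -- x ∈ M1, y ∈ N1 : even cycle (0, x⊗y)
    left
    refine ⟨(0, x ⊗ₜ y), ?_, ?_⟩
    · simp [LinearMap.prod_apply, hx0, hy0]
    · rintro ⟨⟨a, b⟩, hab⟩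
      apply hyr
      have h2 : TensorProduct.map dM0 LinearMap.id a
          - TensorProduct.map LinearMap.id dN0 b = x ⊗ₜ y := by
        have := congrArg Prod.snd hab
        simpa [sub_eq_add_neg] using this
      have := congrArg (ctr φ) h2
      rw [map_sub, ctr_map, ctr_map, ctr_tmul, hφx, one_smul] at this
      rw [hφf, ctr_zero, map_zero, zero_sub] at this
      exact ⟨-(ctr (φ ∘ₗ LinearMap.id) b), by simpa using this⟩
end
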